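/- arXiv:1906.06511 — 2 statements merged into one kernel-verified Lean document; each statement's English description precedes it below -/
import Mathlib

section
/- Let a : [0,∞) → [0,∞) be a C¹ function with a(0)=0 satisfying a₀ ≤ t a'(t)/a(t) ≤ a₁ for all t > 0, where a₀, a₁ > 0. Then the map ξ ↦ (a(|ξ|)/|ξ|) ξ on ℝⁿ \ {0} is strictly monotone: for all ξ, ζ ∈ ℝⁿ \ {0} with ξ ≠ ζ, one has ((a(|ξ|)/|ξ|) ξ − (a(|ζ|)/|ζ|) ζ) · (ξ − ζ) > 0. -/
open Real Set
open scoped InnerProductSpace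

/-! Writing `s = ‖ξ‖`, `t = ‖ζ‖`, the pairing equals
`(a s - a t) (s - t) + (a s / s + a t / t) (s t - ⟪ξ, ζ⟫)`.
The lower bound on `t a'(t) / a(t)` makes `a` positive and strictly increasing on `(0, ∞)`,
so the first term is positive when `s ≠ t`, and by Cauchy–Schwarz the second is nonnegative,
and positive when `s = t` and `ξ ≠ ζ`. -/

section RadialField

variable {E : Type*} [NormedAddCommGroup E] [InnerProductSpace ℝ E]

lemma real_inner_smul_sub_smul_sub (c d : ℝ) (x y : E) :
    ⟪c • x - d • y, x - y⟫_ℝ = c * ‖x‖ ^ 2 + d * ‖y‖ ^ 2 - (c + d) * ⟪x, y⟫_ℝ := by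
  rw [inner_sub_left, inner_sub_right, inner_sub_right, real_inner_smul_left,
    real_inner_smul_left, real_inner_smul_left, real_inner_smul_left,
    real_inner_self_eq_norm_sq, real_inner_self_eq_norm_sq, real_inner_comm y x]
  ring

lemma real_inner_lt_norm_mul_norm_of_norm_eq {x y : E} (hx : x ≠ 0) (h : ‖x‖ = ‖y‖)
    (hxy : x ≠ y) : ⟪x, y⟫_ℝ < ‖x‖ * ‖y‖ := by
  rw [inner_lt_norm_mul_iff_real, ← h]
  exact (smul_right_injective E (norm_ne_zero_iff.mpr hx)).ne hxy

theorem real_inner_radial_sub_pos {f : ℝ → ℝ} (hf : StrictMonoOn f (Ioi 0))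
    (hpos : ∀ t > 0, 0 < f t) {x y : E} (hx : x ≠ 0) (hy : y ≠ 0) (hxy : x ≠ y) :
    0 < ⟪(f ‖x‖ / ‖x‖) • x - (f ‖y‖ / ‖y‖) • y, x - y⟫_ℝ := by
  have hs : 0 < ‖x‖ := norm_pos_iff.mpr hx
  have ht : 0 < ‖y‖ := norm_pos_iff.mpr hy
  have hc : 0 < f ‖x‖ / ‖x‖ + f ‖y‖ / ‖y‖ := by
    have := hpos _ hs; have := hpos _ ht; positivity
  have hsplit : ⟪(f ‖x‖ / ‖x‖) • x - (f ‖y‖ / ‖y‖) • y, x - y⟫_ℝ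
      = (f ‖x‖ - f ‖y‖) * (‖x‖ - ‖y‖)
        + (f ‖x‖ / ‖x‖ + f ‖y‖ / ‖y‖) * (‖x‖ * ‖y‖ - ⟪x, y⟫_ℝ) := by
    rw [real_inner_smul_sub_smul_sub]
    field_simp
    ring
  rw [hsplit]
  rcases eq_or_ne ‖x‖ ‖y‖ with hnorm | hnorm
  · have hcs := real_inner_lt_norm_mul_norm_of_norm_eq hx hnorm hxy
    rw [hnorm] at hc hcs ⊢
    rw [sub_self, sub_self, zero_mul, zero_add]
    exact mul_pos hc (sub_pos.mpr hcs)
  · have hmono : 0 < (f ‖x‖ - f ‖y‖) * (‖x‖ - ‖y‖) := by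
      rcases hnorm.lt_or_gt with hlt | hlt
      · exact mul_pos_of_neg_of_neg (sub_neg.mpr (hf hs ht hlt)) (sub_neg.mpr hlt)
      · exact mul_pos (sub_pos.mpr (hf ht hs hlt)) (sub_pos.mpr hlt)
    have hcs : 0 ≤ ‖x‖ * ‖y‖ - ⟪x, y⟫_ℝ := sub_nonneg.mpr (real_inner_le_norm x y)
    exact add_pos_of_pos_of_nonneg hmono (mul_nonneg hc.le hcs)

end RadialField

lemma pos_and_deriv_pos_of_le_mul_deriv_div {a : ℝ → ℝ} {a₀ t : ℝ} (ha₀ : 0 < a₀)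
    (ht : 0 < t) (hat : 0 ≤ a t) (h : a₀ ≤ t * deriv a t / a t) :
    0 < a t ∧ 0 < deriv a t := by
  rcases div_pos_iff.mp (ha₀.trans_le h) with ⟨htd, hpos⟩ | ⟨-, hneg⟩
  · exact ⟨hpos, pos_of_mul_pos_right htd ht.le⟩
  · exact absurd hat hneg.not_ge

theorem a_laplacian_strict_monotone_general
    (n : ℕ)
    (a : ℝ → ℝ) (a₀ a₁ : ℝ)
    (ha₀ : 0 < a₀)
    (haC1 : ContDiff ℝ 1 a)
    (ha_nonneg : ∀ t, 0 ≤ t → 0 ≤ a t)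
    (hcond : ∀ t > (0:ℝ), a₀ ≤ t * deriv a t / a t ∧ t * deriv a t / a t ≤ a₁) :
    ∀ ξ ζ : EuclideanSpace ℝ (Fin n), ξ ≠ 0 → ζ ≠ 0 → ξ ≠ ζ →
      (0:ℝ) < inner ℝ ((a ‖ξ‖ / ‖ξ‖) • ξ - (a ‖ζ‖ / ‖ζ‖) • ζ) (ξ - ζ) := by
  have hpos : ∀ t > 0, 0 < a t ∧ 0 < deriv a t := fun t ht =>
    pos_and_deriv_pos_of_le_mul_deriv_div ha₀ ht (ha_nonneg t ht.le) (hcond t ht).1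
  have hmono : StrictMonoOn a (Ioi 0) :=
    strictMonoOn_of_deriv_pos (convex_Ioi 0) haC1.continuous.continuousOn
      (by rw [interior_Ioi]; exact fun t ht => (hpos t ht).2)
  intro ξ ζ hξ hζ hne
  exact real_inner_radial_sub_pos hmono (fun t ht => (hpos t ht).1) hξ hζ hne

/-- Strict monotonicity of the A-Laplacian's vector field
`ξ ↦ (a(‖ξ‖)/‖ξ‖) ξ` on `ℝⁿ \ {0}`. -/
theorem a_laplacian_strict_monotone
    (n : ℕ) (hn : 2 ≤ n)
    (a : ℝ → ℝ) (a₀ a₁ : ℝ)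
    (ha₀ : 0 < a₀) (ha₁ : a₀ ≤ a₁)
    (haC1 : ContDiff ℝ 1 a)
    (ha_nonneg : ∀ t, 0 ≤ t → 0 ≤ a t)
    (ha0 : a 0 = 0)
    (hcond : ∀ t > (0:ℝ), a₀ ≤ t * deriv a t / a t ∧ t * deriv a t / a t ≤ a₁) :
    ∀ ξ ζ : EuclideanSpace ℝ (Fin n), ξ ≠ 0 → ζ ≠ 0 → ξ ≠ ζ →
      (0:ℝ) < inner ℝ ((a ‖ξ‖ / ‖ξ‖) • ξ - (a ‖ζ‖ / ‖ζ‖) • ζ) (ξ - ζ) :=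
  a_laplacian_strict_monotone_general n a a₀ a₁ ha₀ haC1 ha_nonneg hcond
end

section
/- Let a be C¹ with a(0)=0 and a₀ ≤ t a'(t)/a(t) ≤ a₁ for t > 0. With the radial barrier v(x) = k(e^{−αρ²} − e^{−α(r+ε)²}) on the annulus D = {r/2 < ρ < r+ε}, where ρ = |x−x₀|, k > 0, α = κ/r², κ = 2(1 + n/a₀), the A-Laplacian Δ_A v = div((a(|∇v|)/|∇v|) ∇v) satisfies Δ_A v(x) ≥ a(|∇v(x)|)/ρ for all x ∈ D. -/
/-!
With `ρ = ‖y - x₀‖`, the barrier is radial: `∇v = -(f(ρ)/ρ) (y - x₀)` with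
`f(ρ) = |∇v| = 2kαρ e^{-αρ²}`, so the flux is `G(ρ) (y - x₀)` with `G(ρ) = -a(f(ρ))/ρ`.
A radial field has divergence `n G(ρ) + ρ G'(ρ)`, and since `ρ f'(ρ) = (1 - 2αρ²) f(ρ)` this is
`(a(f) + (2αρ² - 1) f a'(f) - n a(f)) / ρ`. On the annulus `ρ > r/2`, so
`2αρ² - 1 ≥ κ/2 - 1 = n/a₀`, and `f a'(f) ≥ a₀ a(f)` makes the last two terms together nonnegative.
-/

open Real Set Finset

noncomputable def barrierSlope (k α t : ℝ) : ℝ := 2 * k * α * t * exp (-(α * t ^ 2))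

theorem hasDerivAt_barrierSlope (k α t : ℝ) :
    HasDerivAt (barrierSlope k α) (2 * k * α * exp (-(α * t ^ 2)) * (1 - 2 * α * t ^ 2)) t := by
  have hexp : HasDerivAt (fun s => -(α * s ^ 2)) (-(α * (2 * t))) t := by
    simpa using ((hasDerivAt_pow 2 t).const_mul α).fun_neg
  have hslope : barrierSlope k α = fun s => 2 * k * α * (s * exp (-(α * s ^ 2))) := by
    ext s; unfold barrierSlope; ring
  rw [hslope]
  exact ((hasDerivAt_id' t).fun_mul hexp.exp).const_mul (2 * k * α) |>.congr_deriv (by ring)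

section InnerProductSpace

variable {E : Type*} [NormedAddCommGroup E] [InnerProductSpace ℝ E]

theorem hasFDerivAt_norm_sub {x x₀ : E} (h : x ≠ x₀) :
    HasFDerivAt (fun y => ‖y - x₀‖) (‖x - x₀‖⁻¹ • innerSL ℝ (x - x₀)) x := by
  have hρ : ‖x - x₀‖ ≠ 0 := norm_ne_zero_iff.2 (sub_ne_zero.2 h)
  have hsq := (((hasFDerivAt_id x).sub_const x₀).norm_sq).sqrt (by positivity)
  simp only [sqrt_sq (norm_nonneg _), id] at hsq
  convert hsq using 1
  ext w
  simp only [map_sub, smul_apply, sub_apply, coe_innerSL_apply, smul_eq_mul, one_div,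
    mul_inv_rev, ContinuousLinearMap.comp_id, nsmul_eq_mul, Nat.cast_ofNat]
  field_simp

noncomputable def gaussianBarrier (k α c : ℝ) (x₀ y : E) : ℝ := k * (exp (-(α * ‖y - x₀‖ ^ 2)) - c)

variable (k α c : ℝ) (x₀ : E)

theorem hasFDerivAt_gaussianBarrier (y : E) :
    HasFDerivAt (gaussianBarrier k α c x₀)
      ((-(2 * k * α) * exp (-(α * ‖y - x₀‖ ^ 2))) • innerSL ℝ (y - x₀)) y := by
  have hsq : HasFDerivAt (fun y : E => ‖y - x₀‖ ^ 2) (2 • innerSL ℝ (y - x₀)) y := by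
    simpa using ((hasFDerivAt_id y).sub_const x₀).norm_sq
  refine ((((hsq.const_mul α).fun_neg).exp).sub_const c).const_mul k |>.congr_fderiv ?_
  ext w
  simp only [map_sub, neg_apply, smul_apply, sub_apply, coe_innerSL_apply, nsmul_eq_mul,
    Nat.cast_ofNat, smul_eq_mul]
  ring

theorem fderiv_gaussianBarrier_apply (y w : E) :
    fderiv ℝ (gaussianBarrier k α c x₀) y w
      = -(2 * k * α) * exp (-(α * ‖y - x₀‖ ^ 2)) * inner ℝ (y - x₀) w := by
  simp [(hasFDerivAt_gaussianBarrier k α c x₀ y).fderiv, inner_sub_left]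

theorem gradient_gaussianBarrier [CompleteSpace E] (y : E) :
    gradient (gaussianBarrier k α c x₀) y
      = (-(2 * k * α) * exp (-(α * ‖y - x₀‖ ^ 2))) • (y - x₀) := by
  refine HasGradientAt.gradient ?_
  rw [hasGradientAt_iff_hasFDerivAt]
  refine (hasFDerivAt_gaussianBarrier k α c x₀ y).congr_fderiv ?_
  ext w
  simp

theorem norm_gradient_gaussianBarrier [CompleteSpace E] {k α : ℝ} (hk : 0 ≤ k) (hα : 0 ≤ α)
    (c : ℝ) (x₀ y : E) :
    ‖gradient (gaussianBarrier k α c x₀) y‖ = barrierSlope k α ‖y - x₀‖ := by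
  rw [gradient_gaussianBarrier, norm_smul, norm_mul, norm_neg, norm_of_nonneg (by positivity),
    norm_of_nonneg (exp_pos _).le, barrierSlope]
  ring

theorem flux_gaussianBarrier_apply [CompleteSpace E] (a : ℝ → ℝ) {k α : ℝ} (hk : 0 < k)
    (hα : 0 < α) (c : ℝ) (x₀ y w : E) :
    a ‖gradient (gaussianBarrier k α c x₀) y‖ / ‖gradient (gaussianBarrier k α c x₀) y‖
        * fderiv ℝ (gaussianBarrier k α c x₀) y w
      = -(a (barrierSlope k α ‖y - x₀‖) / ‖y - x₀‖) * inner ℝ (y - x₀) w := by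
  rw [norm_gradient_gaussianBarrier hk.le hα.le, fderiv_gaussianBarrier_apply]
  rcases eq_or_ne y x₀ with rfl | hy
  · simp
  have hρ : 0 < ‖y - x₀‖ := norm_pos_iff.2 (sub_ne_zero.2 hy)
  have hs : barrierSlope k α ‖y - x₀‖ ≠ 0 := by unfold barrierSlope; positivity
  rw [barrierSlope] at hs ⊢
  field_simp

end InnerProductSpace

section EuclideanSpace

variable {ι : Type*} [Fintype ι]

theorem hasFDerivAt_sub_apply (x₀ x : EuclideanSpace ℝ ι) (i : ι) :
    HasFDerivAt (fun y : EuclideanSpace ℝ ι => (y - x₀) i)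
      (EuclideanSpace.proj i : EuclideanSpace ℝ ι →L[ℝ] ℝ) x := by
  simpa using
    ((EuclideanSpace.proj i : EuclideanSpace ℝ ι →L[ℝ] ℝ).hasFDerivAt (x := x)).sub_const (x₀ i)

theorem sum_fderiv_radial_field [DecidableEq ι] {φ : ℝ → ℝ} {φ' : ℝ} {x₀ x : EuclideanSpace ℝ ι}
    (hx : x ≠ x₀) (hφ : HasDerivAt φ φ' ‖x - x₀‖) :
    ∑ i, fderiv ℝ (fun y => φ ‖y - x₀‖ * (y - x₀) i) x (EuclideanSpace.single i 1)
      = Fintype.card ι * φ ‖x - x₀‖ + ‖x - x₀‖ * φ' := by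
  have hρ : ‖x - x₀‖ ≠ 0 := norm_ne_zero_iff.2 (sub_ne_zero.2 hx)
  have hterm : ∀ i, fderiv ℝ (fun y => φ ‖y - x₀‖ * (y - x₀) i) x (EuclideanSpace.single i 1)
      = φ ‖x - x₀‖ + φ' * ‖x - x₀‖⁻¹ * (x - x₀) i ^ 2 := by
    intro i
    have h : HasFDerivAt (fun y => φ ‖y - x₀‖ * (y - x₀) i) _ x :=
      (hφ.comp_hasFDerivAt x (hasFDerivAt_norm_sub hx)).mul (hasFDerivAt_sub_apply x₀ x i)
    rw [h.fderiv]
    simp only [Function.comp_apply, add_apply, smul_apply, PiLp.proj_apply, PiLp.single_eq_same,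
      coe_innerSL_apply, EuclideanSpace.inner_single_right, conj_trivial, smul_eq_mul]
    ring
  rw [Finset.sum_congr rfl fun i _ => hterm i, Finset.sum_add_distrib, ← Finset.mul_sum,
    ← EuclideanSpace.real_norm_sq_eq, sum_const, card_univ, nsmul_eq_mul]
  field_simp

theorem sum_fderiv_flux_gaussianBarrier [DecidableEq ι] {a : ℝ → ℝ} {k α : ℝ} (hk : 0 < k)
    (hα : 0 < α) (c : ℝ) {x₀ x : EuclideanSpace ℝ ι} (hx : x ≠ x₀)
    (ha : DifferentiableAt ℝ a (barrierSlope k α ‖x - x₀‖)) :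
    ∑ i, fderiv ℝ (fun y => a ‖gradient (gaussianBarrier k α c x₀) y‖
        / ‖gradient (gaussianBarrier k α c x₀) y‖
        * fderiv ℝ (gaussianBarrier k α c x₀) y (EuclideanSpace.single i 1)) x
        (EuclideanSpace.single i 1)
      = (a (barrierSlope k α ‖x - x₀‖)
          + (2 * α * ‖x - x₀‖ ^ 2 - 1) * barrierSlope k α ‖x - x₀‖
            * deriv a (barrierSlope k α ‖x - x₀‖)
          - Fintype.card ι * a (barrierSlope k α ‖x - x₀‖)) / ‖x - x₀‖ := by
  have hρ : ‖x - x₀‖ ≠ 0 := norm_ne_zero_iff.2 (sub_ne_zero.2 hx)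
  have hG : HasDerivAt (fun t => -(a (barrierSlope k α t) / t)) _ ‖x - x₀‖ :=
    ((ha.hasDerivAt.comp _ (hasDerivAt_barrierSlope k α _)).div (hasDerivAt_id' _) hρ).fun_neg
  have hdiv := sum_fderiv_radial_field hx hG
  beta_reduce at hdiv
  simp only [flux_gaussianBarrier_apply a hk hα, EuclideanSpace.inner_single_right, one_mul,
    conj_trivial]
  rw [hdiv, Function.comp_apply, barrierSlope]
  field_simp
  ring

end EuclideanSpace

theorem div_le_two_mul_sq_sub_one {N a₀ r ρ : ℝ} (hN : 0 ≤ N) (ha₀ : 0 < a₀) (hr : 0 < r)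
    (hρ : r / 2 < ρ) : N / a₀ ≤ 2 * (2 * (1 + N / a₀) / r ^ 2) * ρ ^ 2 - 1 := by
  have h4 : 1 ≤ 4 * ρ ^ 2 / r ^ 2 := by
    rw [one_le_div (by positivity)]; nlinarith
  have hq : 2 * (2 * (1 + N / a₀) / r ^ 2) * ρ ^ 2 = (1 + N / a₀) * (4 * ρ ^ 2 / r ^ 2) := by
    ring
  nlinarith [div_nonneg hN ha₀.le]

theorem radial_barrier_A_laplacian_lower_bound_general
    (n : ℕ)
    (a : ℝ → ℝ) (a₀ a₁ : ℝ)
    (ha₀ : 0 < a₀)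
    (haC1 : ContDiff ℝ 1 a)
    (ha_nonneg : ∀ t, 0 ≤ t → 0 ≤ a t)
    (hcond : ∀ t > (0:ℝ), a₀ ≤ t * deriv a t / a t ∧ t * deriv a t / a t ≤ a₁)
    (κ α r ε k : ℝ)
    (hκ : κ = 2 * (1 + (n : ℝ) / a₀)) (hr : 0 < r) (hα : α = κ / r ^ 2)
    (hk : 0 < k)
    (x₀ x : EuclideanSpace ℝ (Fin n))
    (hx : ‖x - x₀‖ ∈ Ioo (r / 2) (r + ε)) :
    let v : EuclideanSpace ℝ (Fin n) → ℝ :=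
      fun y => k * (exp (-(α * ‖y - x₀‖ ^ 2)) - exp (-(α * (r + ε) ^ 2)))
    let ρ : ℝ := ‖x - x₀‖
    let E : Fin n → EuclideanSpace ℝ (Fin n) := fun i => EuclideanSpace.single i 1
    a ‖gradient v x‖ / ρ ≤
      ∑ i : Fin n, fderiv ℝ
        (fun y => (a ‖gradient v y‖ / ‖gradient v y‖) * fderiv ℝ v y (E i)) x (E i) := by
  intro v ρ E
  change a ‖gradient (gaussianBarrier k α _ x₀) x‖ / ρ ≤ ∑ i : Fin n, fderiv ℝ
    (fun y => a ‖gradient (gaussianBarrier k α _ x₀) y‖ / ‖gradient (gaussianBarrier k α _ x₀) y‖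
      * fderiv ℝ (gaussianBarrier k α _ x₀) y (EuclideanSpace.single i 1)) x
      (EuclideanSpace.single i 1)
  have hρ : 0 < ρ := (half_pos hr).trans hx.1
  have hα₀ : 0 < α := by rw [hα, hκ]; positivity
  have hx₀ : x ≠ x₀ := sub_ne_zero.1 (norm_pos_iff.1 hρ)
  set s := barrierSlope k α ρ
  have hs : 0 < s := by unfold s barrierSlope; positivity
  have hgrowth := (hcond s hs).1
  have has : 0 < a s := (ha_nonneg s hs.le).lt_of_ne' fun h => by
    rw [h, div_zero] at hgrowth; linarith
  have hannulus : n / a₀ ≤ 2 * α * ρ ^ 2 - 1 := by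
    rw [hα, hκ]; exact div_le_two_mul_sq_sub_one n.cast_nonneg ha₀ hr hx.1
  rw [norm_gradient_gaussianBarrier hk.le hα₀.le,
    sum_fderiv_flux_gaussianBarrier hk hα₀ _ hx₀ ((haC1.differentiable one_ne_zero) s),
    div_le_div_iff_of_pos_right hρ, Fintype.card_fin]
  have hbracket : n * a s ≤ (2 * α * ρ ^ 2 - 1) * (s * deriv a s) := calc
    n * a s = n / a₀ * (a₀ * a s) := by field_simp
    _ ≤ (2 * α * ρ ^ 2 - 1) * (s * deriv a s) :=
      mul_le_mul hannulus ((le_div_iff₀ has).1 hgrowth) (by positivity)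
        ((div_nonneg n.cast_nonneg ha₀.le).trans hannulus)
  linarith

/-- The radial barrier `v(x) = k(e^{-αρ²} - e^{-α(r+ε)²})` satisfies
`Δ_A v ≥ a(|∇v|)/ρ` on the annulus `D = {r/2 < ρ < r+ε}`, where
`Δ_A v = div((a(|∇v|)/|∇v|) ∇v)`. -/
theorem radial_barrier_A_laplacian_lower_bound
    (n : ℕ) (hn : 2 ≤ n)
    (a : ℝ → ℝ) (a₀ a₁ : ℝ)
    (ha₀ : 0 < a₀) (ha₁ : a₀ ≤ a₁)
    (haC1 : ContDiff ℝ 1 a)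
    (ha_nonneg : ∀ t, 0 ≤ t → 0 ≤ a t)
    (ha0 : a 0 = 0)
    (hcond : ∀ t > (0:ℝ), a₀ ≤ t * deriv a t / a t ∧ t * deriv a t / a t ≤ a₁)
    (κ α r ε k : ℝ)
    (hκ : κ = 2 * (1 + (n : ℝ) / a₀)) (hr : 0 < r) (hα : α = κ / r ^ 2)
    (hε : ε ∈ Ioo 0 r) (hk : 0 < k)
    (x₀ x : EuclideanSpace ℝ (Fin n))
    (hx : ‖x - x₀‖ ∈ Ioo (r / 2) (r + ε)) :
    let v : EuclideanSpace ℝ (Fin n) → ℝ :=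
      fun y => k * (exp (-(α * ‖y - x₀‖ ^ 2)) - exp (-(α * (r + ε) ^ 2)))
    let ρ : ℝ := ‖x - x₀‖
    let E : Fin n → EuclideanSpace ℝ (Fin n) := fun i => EuclideanSpace.single i 1
    a ‖gradient v x‖ / ρ ≤
      ∑ i : Fin n, fderiv ℝ
        (fun y => (a ‖gradient v y‖ / ‖gradient v y‖) * fderiv ℝ v y (E i)) x (E i) :=
  radial_barrier_A_laplacian_lower_bound_general n a a₀ a₁ ha₀ haC1 ha_nonneg hcond κ α r ε k hκ hr
    hα hk x₀ x hx
end
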